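/- arXiv:2211.12487 — 3 statements merged into one kernel-verified Lean document; each statement's English description precedes it below -/
import Mathlib

section
/- Let d ≥ 1 be an integer. Suppose B₀ is a real matrix and for each i = 1,…,d we are given: a linear bijection ρᵢ between real matrix spaces that preserves the Frobenius norm (a reshaping), defined on the space containing B_{i-1}; a real matrix Uᵢ with orthonormal columns; real matrices Bᵢ and Eᵢ; and a real number εᵢ ≥ 0, such that ρᵢ(B_{i-1}) = Uᵢ Bᵢ + Eᵢ, Uᵢᵀ Eᵢ = 0, and ‖Eᵢ‖_F ≤ εᵢ. Define the approximations backwards by B̂_d := B_d and B̂_{i-1} := ρᵢ⁻¹(Uᵢ B̂ᵢ) for i = d, d−1, …, 1. Then ‖B₀ − B̂₀‖_F ≤ √(ε₁² + ε₂² + ⋯ + ε_d²). -/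
open Matrix

/-- Frobenius norm of a real matrix: `‖A‖_F = √(∑ᵢⱼ Aᵢⱼ²)`. -/
noncomputable def frobNorm {m n : Type*} [Fintype m] [Fintype n] (A : Matrix m n ℝ) : ℝ :=
  Real.sqrt (∑ i, ∑ j, (A i j) ^ 2)

/-!
Each split is an orthogonal decomposition: after the norm-preserving reshaping `ρᵢ`, the error
`B_{i-1} - B̂_{i-1}` becomes `Uᵢ (Bᵢ - B̂ᵢ) + Eᵢ`, whose two summands are orthogonal because
`Uᵢᵀ Eᵢ = 0`, and `Uᵢ` is an isometry. Hence `‖B_{i-1} - B̂_{i-1}‖² = ‖Bᵢ - B̂ᵢ‖² + ‖Eᵢ‖²`, and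
the squared errors telescope from `B_d - B̂_d = 0` to `‖B₀ - B̂₀‖² = ∑ᵢ ‖Eᵢ‖² ≤ ∑ᵢ εᵢ²`.
-/

theorem Fin.eq_sum_of_castSucc_eq_succ_add {M : Type*} [AddCommMonoid M] :
    ∀ {d : ℕ} (f : Fin (d + 1) → M) (g : Fin d → M), f (Fin.last d) = 0 →
      (∀ i : Fin d, f i.castSucc = f i.succ + g i) → f 0 = ∑ i, g i
  | 0, f, _, hlast, _ => by simpa using hlast
  | d + 1, f, g, hlast, hstep => by
    have htail : f 1 = ∑ i : Fin d, g i.succ :=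
      Fin.eq_sum_of_castSucc_eq_succ_add (fun i => f i.succ) (fun i => g i.succ) hlast
        fun i => by simpa only [Fin.succ_castSucc] using hstep i.succ
    calc f 0 = f 1 + g 0 := hstep 0
      _ = ∑ i, g i := by rw [htail, Fin.sum_univ_succ, add_comm]

section Frobenius

variable {l m n : Type*} [Fintype l] [Fintype m] [Fintype n]

theorem frobNorm_sq_eq_trace (A : Matrix m n ℝ) : frobNorm A ^ 2 = trace (Aᵀ * A) := by
  rw [frobNorm, Real.sq_sqrt (by positivity)]
  simp only [trace, diag, mul_apply, transpose_apply, ← pow_two]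
  exact Finset.sum_comm

theorem frobNorm_eq_sqrt_trace (A : Matrix m n ℝ) : frobNorm A = √(trace (Aᵀ * A)) := by
  rw [← frobNorm_sq_eq_trace]
  exact (Real.sqrt_sq (Real.sqrt_nonneg _)).symm

theorem frobNorm_mul_of_transpose_mul_self_eq_one [DecidableEq m] {U : Matrix l m ℝ}
    (hU : Uᵀ * U = 1) (X : Matrix m n ℝ) : frobNorm (U * X) = frobNorm X := by
  rw [frobNorm_eq_sqrt_trace, frobNorm_eq_sqrt_trace, transpose_mul, Matrix.mul_assoc,
    ← Matrix.mul_assoc Uᵀ, hU, Matrix.one_mul]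

theorem frobNorm_add_sq_of_transpose_mul_eq_zero {A E : Matrix m n ℝ} (h : Aᵀ * E = 0) :
    frobNorm (A + E) ^ 2 = frobNorm A ^ 2 + frobNorm E ^ 2 := by
  have h' : Eᵀ * A = 0 := by
    rw [← transpose_transpose (Eᵀ * A), transpose_mul, transpose_transpose, h, transpose_zero]
  simp only [frobNorm_sq_eq_trace, transpose_add, Matrix.add_mul, Matrix.mul_add, h, h', add_zero,
    zero_add, trace_add]

end Frobenius

theorem frobNorm_sub_sq_of_orthogonal_split {m n m' n' p : Type*} [Fintype m] [Fintype n]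
    [Fintype m'] [DecidableEq m'] [Fintype n'] [Fintype p]
    (ρ : Matrix m n ℝ ≃ₗ[ℝ] Matrix p n' ℝ) (hρ : ∀ X, frobNorm (ρ X) = frobNorm X)
    {U : Matrix p m' ℝ} (hU : Uᵀ * U = 1) {E : Matrix p n' ℝ} (horth : Uᵀ * E = 0)
    {B Bh : Matrix m n ℝ} {B' Bh' : Matrix m' n' ℝ}
    (hsplit : ρ B = U * B' + E) (hrec : Bh = ρ.symm (U * Bh')) :
    frobNorm (B - Bh) ^ 2 = frobNorm (B' - Bh') ^ 2 + frobNorm E ^ 2 := by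
  have herr : ρ (B - Bh) = U * (B' - Bh') + E := by
    rw [map_sub, hsplit, hrec, LinearEquiv.apply_symm_apply, Matrix.mul_sub]
    abel
  have hUE : (U * (B' - Bh'))ᵀ * E = 0 := by
    rw [transpose_mul, Matrix.mul_assoc, horth, Matrix.mul_zero]
  rw [← hρ, herr, frobNorm_add_sq_of_transpose_mul_eq_zero hUE,
    frobNorm_mul_of_transpose_mul_self_eq_one hU]

theorem tt_ice_error_bound_general
    (d : ℕ)
    (m n : Fin (d + 1) → Type) (p : Fin d → Type)
    [∀ i, Fintype (m i)] [∀ i, DecidableEq (m i)]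
    [∀ i, Fintype (n i)] [∀ i, Fintype (p i)]
    (B Bh : ∀ i, Matrix (m i) (n i) ℝ)
    (ρ : ∀ i : Fin d, Matrix (m i.castSucc) (n i.castSucc) ℝ ≃ₗ[ℝ] Matrix (p i) (n i.succ) ℝ)
    (hρ : ∀ (i : Fin d) (X : Matrix (m i.castSucc) (n i.castSucc) ℝ),
      frobNorm (ρ i X) = frobNorm X)
    (U : ∀ i : Fin d, Matrix (p i) (m i.succ) ℝ)
    (hU : ∀ i : Fin d, (U i)ᵀ * U i = 1)
    (E : ∀ i : Fin d, Matrix (p i) (n i.succ) ℝ)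
    (ε : Fin d → ℝ)
    (hsplit : ∀ i : Fin d, ρ i (B i.castSucc) = U i * B i.succ + E i)
    (horth : ∀ i : Fin d, (U i)ᵀ * E i = 0)
    (hE : ∀ i : Fin d, frobNorm (E i) ≤ ε i)
    (hlast : Bh (Fin.last d) = B (Fin.last d))
    (hrec : ∀ i : Fin d, Bh i.castSucc = (ρ i).symm (U i * Bh i.succ)) :
    frobNorm (B 0 - Bh 0) ≤ Real.sqrt (∑ i, ε i ^ 2) := by
  have hsq : frobNorm (B 0 - Bh 0) ^ 2 = ∑ i, frobNorm (E i) ^ 2 :=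
    Fin.eq_sum_of_castSucc_eq_succ_add (fun i => frobNorm (B i - Bh i) ^ 2) _
      (by simp [hlast, frobNorm])
      fun i => frobNorm_sub_sq_of_orthogonal_split (ρ i) (hρ i) (hU i) (horth i) (hsplit i)
        (hrec i)
  refine Real.le_sqrt_of_sq_le (hsq ▸ ?_)
  gcongr with i
  exacts [Real.sqrt_nonneg _, hE i]

/-- **TT-ICE error bound (Theorem 3.1).**  If a matrix `B₀` is successively split as
`ρᵢ(B_{i-1}) = Uᵢ Bᵢ + Eᵢ` with `Uᵢ` having orthonormal columns, `Uᵢᵀ Eᵢ = 0`,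
`‖Eᵢ‖_F ≤ εᵢ`, and the reshapings `ρᵢ` preserve the Frobenius norm, then the
backwards-reconstructed approximation `B̂₀` (with `B̂_d = B_d`,
`B̂_{i-1} = ρᵢ⁻¹(Uᵢ B̂ᵢ)`) satisfies `‖B₀ − B̂₀‖_F ≤ √(∑ᵢ εᵢ²)`. -/
theorem tt_ice_error_bound
    (d : ℕ) (hd : 1 ≤ d)
    (m n : Fin (d + 1) → Type) (p : Fin d → Type)
    [∀ i, Fintype (m i)] [∀ i, DecidableEq (m i)]
    [∀ i, Fintype (n i)] [∀ i, Fintype (p i)]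
    (B Bh : ∀ i, Matrix (m i) (n i) ℝ)
    (ρ : ∀ i : Fin d, Matrix (m i.castSucc) (n i.castSucc) ℝ ≃ₗ[ℝ] Matrix (p i) (n i.succ) ℝ)
    (hρ : ∀ (i : Fin d) (X : Matrix (m i.castSucc) (n i.castSucc) ℝ),
      frobNorm (ρ i X) = frobNorm X)
    (U : ∀ i : Fin d, Matrix (p i) (m i.succ) ℝ)
    (hU : ∀ i : Fin d, (U i)ᵀ * U i = 1)
    (E : ∀ i : Fin d, Matrix (p i) (n i.succ) ℝ)
    (ε : Fin d → ℝ) (hεnn : ∀ i, 0 ≤ ε i)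
    (hsplit : ∀ i : Fin d, ρ i (B i.castSucc) = U i * B i.succ + E i)
    (horth : ∀ i : Fin d, (U i)ᵀ * E i = 0)
    (hE : ∀ i : Fin d, frobNorm (E i) ≤ ε i)
    (hlast : Bh (Fin.last d) = B (Fin.last d))
    (hrec : ∀ i : Fin d, Bh i.castSucc = (ρ i).symm (U i * Bh i.succ)) :
    frobNorm (B 0 - Bh 0) ≤ Real.sqrt (∑ i, ε i ^ 2) :=
  tt_ice_error_bound_general d m n p B Bh ρ hρ U hU E ε hsplit horth hE hlast hrec
end

section
/- Let d ≥ 1 be an integer, let r₀ = 1 and r₁,…,r_{d+1} be positive integers, and let s₁,…,s_d be natural numbers. For j = 1,…,d+1 let A_j ∈ ℝ^{r_{j-1}×r_j}, and let L₁ ∈ ℝ^{1×s₁}, L_{j,1} ∈ ℝ^{r_{j-1}×s_j} and L_{j,2} ∈ ℝ^{s_{j-1}×s_j} for j = 2,…,d be arbitrary real matrices. Define the updated block matrices M₁ := [A₁ L₁] ∈ ℝ^{1×(r₁+s₁)}, M_j := [[A_j, L_{j,1}]; [0_{s_{j-1}×r_j}, L_{j,2}]] ∈ ℝ^{(r_{j-1}+s_{j-1})×(r_j+s_j)}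 for j = 2,…,d, and M_{d+1} := [A_{d+1}; 0_{s_d×r_{d+1}}] ∈ ℝ^{(r_d+s_d)×r_{d+1}}. Then M₁ M₂ ⋯ M_{d+1} = A₁ A₂ ⋯ A_{d+1}. -/
open Matrix

/-- Product `M₁ * M₂ * ⋯ * M_{N+1}` of a chain of real matrices with compatible
(but possibly heterogeneous) index types `τ 0, τ 1, …, τ (N+1)`. -/
noncomputable def chainProd : (N : ℕ) → (τ : Fin (N + 2) → Type) → (inst : ∀ i, Fintype (τ i)) →
    (M : ∀ j : Fin (N + 1), Matrix (τ j.castSucc) (τ j.succ) ℝ) →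
    Matrix (τ 0) (τ (Fin.last (N + 1))) ℝ
  | 0, _, _, M => M 0
  | N + 1, τ, inst, M =>
    letI := inst
    M 0 * chainProd N (fun i => τ i.succ) (fun i => inst i.succ) (fun j => M j.succ)

theorem Matrix.fromBlocks_zero₂₁_mul_fromBlocks_zero₂₁ {α l m n o p q : Type*}
    [Fintype l] [Fintype m] [NonUnitalNonAssocSemiring α]
    (A : Matrix n l α) (B : Matrix n m α) (D : Matrix o m α)
    (A' : Matrix l p α) (B' : Matrix l q α) (D' : Matrix m q α) :
    fromBlocks A B 0 D * fromBlocks A' B' 0 D' =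
      fromBlocks (A * A') (A * B' + B * D') 0 (D * D') := by
  simp [fromBlocks_multiply]

theorem chainProd_fromBlocks_zero₂₁ (N : ℕ) :
    ∀ (ρ σ : Fin (N + 2) → Type) (iρ : ∀ i, Fintype (ρ i)) (iσ : ∀ i, Fintype (σ i))
      (A : ∀ j : Fin (N + 1), Matrix (ρ j.castSucc) (ρ j.succ) ℝ)
      (B : ∀ j : Fin (N + 1), Matrix (ρ j.castSucc) (σ j.succ) ℝ)
      (D : ∀ j : Fin (N + 1), Matrix (σ j.castSucc) (σ j.succ) ℝ),
      ∃ B' : Matrix (ρ 0) (σ (Fin.last (N + 1))) ℝ,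
        chainProd N (fun i => ρ i ⊕ σ i) (fun i => @instFintypeSum _ _ (iρ i) (iσ i))
            (fun j => fromBlocks (A j) (B j) 0 (D j))
          = fromBlocks (chainProd N ρ iρ A) B' 0 (chainProd N σ iσ D) := by
  induction N with
  | zero => exact fun _ _ _ _ _ B _ => ⟨B 0, rfl⟩
  | succ N ih =>
    intro ρ σ iρ iσ A B D
    obtain ⟨B', hB'⟩ := ih (fun i => ρ i.succ) (fun i => σ i.succ) (fun i => iρ i.succ)
      (fun i => iσ i.succ) (fun j => A j.succ) (fun j => B j.succ) (fun j => D j.succ)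
    exact ⟨_, by rw [chainProd, hB', fromBlocks_zero₂₁_mul_fromBlocks_zero₂₁]; rfl⟩

theorem tt_ice_block_product_invariance_general
    (d : ℕ)
    (r : Fin (d + 2) → ℕ)
    (s : Fin (d + 2) → ℕ)
    (A : ∀ j : Fin (d + 1), Matrix (Fin (r j.castSucc)) (Fin (r j.succ)) ℝ)
    (L₁ : ∀ j : Fin (d + 1), Matrix (Fin (r j.castSucc)) (Fin (s j.succ)) ℝ)
    (L₂ : ∀ j : Fin (d + 1), Matrix (Fin (s j.castSucc)) (Fin (s j.succ)) ℝ) :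
    (chainProd d (fun j => Fin (r j) ⊕ Fin (s j)) (fun _ => inferInstance)
        (fun j => Matrix.fromBlocks (A j) (L₁ j) 0 (L₂ j))).submatrix Sum.inl Sum.inl
      = chainProd d (fun j => Fin (r j)) (fun _ => inferInstance) A := by
  obtain ⟨L', hL'⟩ := chainProd_fromBlocks_zero₂₁ d (fun j => Fin (r j)) (fun j => Fin (s j))
    (fun _ => inferInstance) (fun _ => inferInstance) A L₁ L₂
  rw [hL']
  rfl

/-- **Invariance of previous reconstructions under TT-ICE core expansion (Theorem 3.3,
computational core).**  For core slices `A_j ∈ ℝ^{r_{j-1}×r_j}` (j = 1,…,d+1, with r₀ = 1),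
expand each slice into the block matrix `M_j = [[A_j, L_{j,1}]; [0, L_{j,2}]]`, where the
first slice gets no new rows (`s₀ = 0`, so `M₁ = [A₁ L₁]`) and the last slice gets no new
columns (`s_{d+1} = 0`, so `M_{d+1} = [A_{d+1}; 0]`).  Then the product of the expanded
slices equals the product of the original slices: `M₁ M₂ ⋯ M_{d+1} = A₁ A₂ ⋯ A_{d+1}`. -/
theorem tt_ice_block_product_invariance
    (d : ℕ) (hd : 1 ≤ d)
    (r : Fin (d + 2) → ℕ) (hr0 : r 0 = 1) (hrpos : ∀ j, 0 < r j)
    (s : Fin (d + 2) → ℕ) (hs0 : s 0 = 0) (hslast : s (Fin.last (d + 1)) = 0)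
    (A : ∀ j : Fin (d + 1), Matrix (Fin (r j.castSucc)) (Fin (r j.succ)) ℝ)
    (L₁ : ∀ j : Fin (d + 1), Matrix (Fin (r j.castSucc)) (Fin (s j.succ)) ℝ)
    (L₂ : ∀ j : Fin (d + 1), Matrix (Fin (s j.castSucc)) (Fin (s j.succ)) ℝ) :
    (chainProd d (fun j => Fin (r j) ⊕ Fin (s j)) (fun _ => inferInstance)
        (fun j => Matrix.fromBlocks (A j) (L₁ j) 0 (L₂ j))).submatrix Sum.inl Sum.inl
      = chainProd d (fun j => Fin (r j)) (fun _ => inferInstance) A :=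
  tt_ice_block_product_invariance_general d r s A L₁ L₂
end

section
/- Let U ∈ ℝ^{m×r} and W ∈ ℝ^{m×q} satisfy Uᵀ U = I_r, Wᵀ W = I_q, and Uᵀ W = 0, let Y ∈ ℝ^{m×p}, and set Q := [U W], R := Y − U Uᵀ Y. Then ‖Y − Q Qᵀ Y‖_F = ‖R − W Wᵀ R‖_F, and consequently ‖Y − Q Qᵀ Y‖_F ≤ ‖Y − U Uᵀ Y‖_F. -/
open Matrix

/-!
Since `Wᵀ U = 0`, the matrix `W Wᵀ` kills `U Uᵀ Y`, so `Y − (U Uᵀ + W Wᵀ) Y = R − W Wᵀ R`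
as matrices. As `Wᵀ W = 1`, the residual `R − W Wᵀ R` is orthogonal (for the trace inner
product) to `W Wᵀ R`, and Pythagoras gives `‖R − W Wᵀ R‖_F ≤ ‖R‖_F`.
-/

section Frobenius

variable {m n : Type*} [Fintype m] [Fintype n]

theorem sum_sum_mul_eq_trace_transpose_mul {α : Type*} [NonUnitalNonAssocSemiring α]
    (A B : Matrix m n α) : ∑ i, ∑ j, A i j * B i j = trace (Aᵀ * B) := by
  simp only [trace, diag, mul_apply, transpose_apply]
  exact Finset.sum_comm

theorem sum_sum_add_sq_of_transpose_mul_eq_zero {A B : Matrix m n ℝ} (h : Aᵀ * B = 0) :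
    ∑ i, ∑ j, ((A + B) i j) ^ 2 = ∑ i, ∑ j, (A i j) ^ 2 + ∑ i, ∑ j, (B i j) ^ 2 := by
  have hcross : ∑ i, ∑ j, A i j * B i j = 0 := by
    rw [sum_sum_mul_eq_trace_transpose_mul, h, trace_zero]
  calc ∑ i, ∑ j, ((A + B) i j) ^ 2
      = ∑ i, ∑ j, ((A i j) ^ 2 + (B i j) ^ 2 + 2 * (A i j * B i j)) := by
        simp only [Matrix.add_apply]; ring_nf
    _ = ∑ i, ∑ j, (A i j) ^ 2 + ∑ i, ∑ j, (B i j) ^ 2 + 2 * ∑ i, ∑ j, A i j * B i j := by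
        simp only [Finset.sum_add_distrib, Finset.mul_sum]
    _ = ∑ i, ∑ j, (A i j) ^ 2 + ∑ i, ∑ j, (B i j) ^ 2 := by
        rw [hcross, mul_zero, add_zero]

theorem frobNorm_le_frobNorm_add_of_transpose_mul_eq_zero {A B : Matrix m n ℝ}
    (h : Aᵀ * B = 0) : frobNorm A ≤ frobNorm (A + B) := by
  unfold frobNorm
  apply Real.sqrt_le_sqrt
  rw [sum_sum_add_sq_of_transpose_mul_eq_zero h]
  have : 0 ≤ ∑ i, ∑ j, (B i j) ^ 2 := by positivity
  linarith

end Frobenius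

section Projection

variable {α : Type*} [CommRing α] {m k l p : Type*} [Fintype m] [Fintype k] [Fintype l]

theorem sub_add_projection_mul_of_transpose_mul_eq_zero {U : Matrix m k α} {W : Matrix m l α}
    (hWU : Wᵀ * U = 0) (Y : Matrix m p α) :
    Y - (U * Uᵀ + W * Wᵀ) * Y = (Y - U * Uᵀ * Y) - W * Wᵀ * (Y - U * Uᵀ * Y) := by
  have hkill : W * Wᵀ * (U * Uᵀ * Y) = 0 := by
    simp only [Matrix.mul_assoc, ← Matrix.mul_assoc Wᵀ U, hWU, Matrix.zero_mul, Matrix.mul_zero]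
  rw [Matrix.mul_sub, hkill, sub_zero, Matrix.add_mul]
  abel

theorem transpose_mul_sub_projection [DecidableEq l] {W : Matrix m l α} (hW : Wᵀ * W = 1)
    (R : Matrix m p α) :
    Wᵀ * (R - W * Wᵀ * R) = 0 := by
  rw [Matrix.mul_sub, ← Matrix.mul_assoc, ← Matrix.mul_assoc, hW, Matrix.one_mul, sub_self]

end Projection

theorem frobNorm_sub_projection_le {m l p : Type*} [Fintype m] [Fintype l] [Fintype p]
    [DecidableEq l] {W : Matrix m l ℝ} (hW : Wᵀ * W = 1) (R : Matrix m p ℝ) :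
    frobNorm (R - W * Wᵀ * R) ≤ frobNorm R := by
  have horth : (R - W * Wᵀ * R)ᵀ * (W * Wᵀ * R) = 0 := by
    calc (R - W * Wᵀ * R)ᵀ * (W * Wᵀ * R) = (Wᵀ * (R - W * Wᵀ * R))ᵀ * (Wᵀ * R) := by
          simp only [transpose_mul, transpose_transpose, Matrix.mul_assoc]
      _ = 0 := by rw [transpose_mul_sub_projection hW, transpose_zero, Matrix.zero_mul]
  simpa using frobNorm_le_frobNorm_add_of_transpose_mul_eq_zero horth

theorem basis_expansion_error_general
    (m r q p : ℕ)
    (U : Matrix (Fin m) (Fin r) ℝ) (W : Matrix (Fin m) (Fin q) ℝ)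
    (hW : Wᵀ * W = 1) (hUW : Uᵀ * W = 0)
    (Y : Matrix (Fin m) (Fin p) ℝ)
    (Q : Matrix (Fin m) (Fin r ⊕ Fin q) ℝ) (hQ : Q = Matrix.fromCols U W)
    (R : Matrix (Fin m) (Fin p) ℝ) (hR : R = Y - U * Uᵀ * Y) :
    frobNorm (Y - Q * Qᵀ * Y) = frobNorm (R - W * Wᵀ * R) ∧
      frobNorm (Y - Q * Qᵀ * Y) ≤ frobNorm (Y - U * Uᵀ * Y) := by
  have hWU : Wᵀ * U = 0 := by simpa using congrArg transpose hUW
  have hQQ : Q * Qᵀ = U * Uᵀ + W * Wᵀ := by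
    rw [hQ, transpose_fromCols, fromCols_mul_fromRows]
  have hres : Y - Q * Qᵀ * Y = R - W * Wᵀ * R := by
    rw [hQQ, hR]
    exact sub_add_projection_mul_of_transpose_mul_eq_zero hWU Y
  refine ⟨congrArg frobNorm hres, ?_⟩
  rw [hres, ← hR]
  exact frobNorm_sub_projection_le hW R

/-- **Basis expansion never increases the projection error (TT-ICE core expansion).**
If `U`, `W` have orthonormal columns with `Uᵀ W = 0`, `Q = [U W]`, and
`R = Y − U Uᵀ Y`, then `‖Y − Q Qᵀ Y‖_F = ‖R − W Wᵀ R‖_F`, and consequently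
`‖Y − Q Qᵀ Y‖_F ≤ ‖Y − U Uᵀ Y‖_F`. -/
theorem basis_expansion_error
    (m r q p : ℕ)
    (U : Matrix (Fin m) (Fin r) ℝ) (W : Matrix (Fin m) (Fin q) ℝ)
    (hU : Uᵀ * U = 1) (hW : Wᵀ * W = 1) (hUW : Uᵀ * W = 0)
    (Y : Matrix (Fin m) (Fin p) ℝ)
    (Q : Matrix (Fin m) (Fin r ⊕ Fin q) ℝ) (hQ : Q = Matrix.fromCols U W)
    (R : Matrix (Fin m) (Fin p) ℝ) (hR : R = Y - U * Uᵀ * Y) :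
    frobNorm (Y - Q * Qᵀ * Y) = frobNorm (R - W * Wᵀ * R) ∧
      frobNorm (Y - Q * Qᵀ * Y) ≤ frobNorm (Y - U * Uᵀ * Y) :=
  basis_expansion_error_general m r q p U W hW hUW Y Q hQ R hR
end
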